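/- arXiv:2407.01970 — 5 statements merged into one kernel-verified Lean document; each statement's English description precedes it below -/
import Mathlib

section
/- Let d ≥ 1, let L ≥ 1 be a real number, and let X ⊆ ℤ^d satisfy ‖x − y‖₁ ≥ 10L for all distinct x, y ∈ X. Then for every set B ⊆ ℤ^d there exists a set B̃ ⊆ ℤ^d such that: (i) B ⊆ B̃ ⊆ {x ∈ ℤ^d : dist₁(x, B) ≤ 2L}, and (ii) for every x ∈ X, if (Q_L + x) ∩ B̃ ≠ ∅ then Q_L + x ⊆ B̃, where Q_L := {y ∈ ℤ^d : ‖y‖₁ ≤ L} and Q_L + x := {y + x : y ∈ Q_L}. -/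
open scoped BigOperators
open Matrix

/-- The ℓ¹ norm of a lattice point `x ∈ ℤ^d`, as a real number. -/
noncomputable def norm1 {d : ℕ} (x : Fin d → ℤ) : ℝ := ∑ i, |(x i : ℝ)|

/-- The pairing `x · ω = ∑ i, x i * ω i`. -/
noncomputable def dotw {d : ℕ} (x : Fin d → ℤ) (ω : Fin d → ℝ) : ℝ := ∑ i, (x i : ℝ) * ω i

lemma norm1_sub_le {d : ℕ} (a b c : Fin d → ℤ) :
    norm1 (a - b) ≤ norm1 (a - c) + norm1 (c - b) := by
  unfold norm1
  rw [← Finset.sum_add_distrib]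
  apply Finset.sum_le_sum
  intro i _
  have : ((a - b) i : ℝ) = ((a - c) i : ℝ) + ((c - b) i : ℝ) := by
    push_cast [Pi.sub_apply]; ring
  rw [this]
  exact abs_add_le _ _

/-- **Block-completion lemma** (Lemma 3.14): if the points of `X ⊆ ℤ^d` are pairwise at
ℓ¹-distance at least `10L`, then any `B ⊆ ℤ^d` can be enlarged to `B̃` with
`B ⊆ B̃ ⊆ {x : dist₁(x,B) ≤ 2L}` such that every translate `Q_L + x` (`x ∈ X`) meeting `B̃`
is entirely contained in `B̃`. -/
theorem block_completion (d : ℕ) (hd : 1 ≤ d) (L : ℝ) (hL : 1 ≤ L)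
    (X : Set (Fin d → ℤ))
    (hX : ∀ x ∈ X, ∀ y ∈ X, x ≠ y → 10 * L ≤ norm1 (x - y))
    (B : Set (Fin d → ℤ)) :
    ∃ Bt : Set (Fin d → ℤ),
      B ⊆ Bt ∧
      Bt ⊆ {x : Fin d → ℤ | ∃ b ∈ B, norm1 (x - b) ≤ 2 * L} ∧
      ∀ x ∈ X,
        (((fun y => y + x) '' {y : Fin d → ℤ | norm1 y ≤ L}) ∩ Bt).Nonempty →
        ((fun y => y + x) '' {y : Fin d → ℤ | norm1 y ≤ L}) ⊆ Bt := by
  set Q : Set (Fin d → ℤ) := {y : Fin d → ℤ | norm1 y ≤ L} with hQ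
  set Bt : Set (Fin d → ℤ) :=
    B ∪ ⋃ x ∈ {x ∈ X | (((fun y => y + x) '' Q) ∩ B).Nonempty}, (fun y => y + x) '' Q with hBt
  have hQmem : ∀ p x : Fin d → ℤ, p ∈ (fun y => y + x) '' Q → norm1 (p - x) ≤ L := by
    intro p x ⟨y, hy, hyx⟩
    have : p - x = y := by rw [← hyx]; simp
    rwa [this]
  refine ⟨Bt, fun b hb => Or.inl hb, ?_, ?_⟩
  · rintro p (hp | hp)
    · exact ⟨p, hp, by simp [norm1]; positivity⟩
    · simp only [Set.mem_iUnion] at hp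
      obtain ⟨x, ⟨hxX, q, hq1, hq2⟩, hp⟩ := hp
      refine ⟨q, hq2, ?_⟩
      calc norm1 (p - q) ≤ norm1 (p - x) + norm1 (x - q) := norm1_sub_le _ _ _
        _ ≤ L + L := by
            have h1 := hQmem p x hp
            have h2 := hQmem q x hq1
            have : norm1 (x - q) = norm1 (q - x) := by
              unfold norm1; congr 1; ext i; simp [Pi.sub_apply, abs_sub_comm]
            linarith [this ▸ h2]
        _ = 2 * L := by ring
  · rintro x hxX ⟨p, hpQ, hpBt⟩
    have key : ((fun y => y + x) '' Q ∩ B).Nonempty := by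
      rcases hpBt with hpB | hpU
      · exact ⟨p, hpQ, hpB⟩
      · simp only [Set.mem_iUnion] at hpU
        obtain ⟨x', ⟨hx'X, hne⟩, hp'⟩ := hpU
        have hxx' : x = x' := by
          by_contra hne2
          have h10 := hX x hxX x' hx'X hne2
          have h1 := hQmem p x hpQ
          have h2 := hQmem p x' hp'
          have : norm1 (x - x') ≤ norm1 (x - p) + norm1 (p - x') := norm1_sub_le _ _ _
          have hs : norm1 (x - p) = norm1 (p - x) := by
            unfold norm1; congr 1; ext i; simp [Pi.sub_apply, abs_sub_comm]
          nlinarith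
        exact hxx' ▸ hne
    intro q hq
    exact Or.inr (Set.mem_iUnion.2 ⟨x, Set.mem_iUnion.2 ⟨⟨hxX, key⟩, hq⟩⟩)
end

section
/- Let d ≥ 1, τ > d, γ > 0 and let ω ∈ [0,1]^d be Diophantine with parameters τ, γ. Let L > 0 and let F : ℝ → ℝ be a 1-periodic function satisfying F(θ₂) − F(θ₁) ≥ L(θ₂ − θ₁) for all 0 ≤ θ₁ ≤ θ₂ < 1. Then for every θ ∈ ℝ, every E ∈ ℂ, every δ > 0, and all distinct x, y ∈ ℤ^d with |F(θ + x·ω) − E| < δ and |F(θ + y·ω) − E| < δ, one has ‖x − y‖₁^τ ≥ Lγ/(2δ). -/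
open scoped BigOperators
open Matrix

/-- `ω ∈ [0,1]^d` is Diophantine with parameters `τ, γ`:
`inf_{l ∈ ℤ} |l − x·ω| ≥ γ ‖x‖₁^{−τ}` for all `x ∈ ℤ^d \ {0}`. -/
def IsDiophantine {d : ℕ} (ω : Fin d → ℝ) (τ γ : ℝ) : Prop :=
  (∀ i, ω i ∈ Set.Icc (0 : ℝ) 1) ∧
  ∀ x : Fin d → ℤ, x ≠ 0 → ∀ l : ℤ, γ * norm1 x ^ (-τ) ≤ |(l : ℝ) - dotw x ω|

/-! Reduce both phases `θ + x·ω`, `θ + y·ω` mod 1. On `[0,1)` the function `F` grows at rate at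
least `L`, so `2δ > |F(θ + x·ω) − F(θ + y·ω)| ≥ L·|fract(θ + x·ω) − fract(θ + y·ω)|`; the last
difference is `(x − y)·ω` minus an integer, hence at least `γ‖x − y‖₁^{−τ}` by the Diophantine
condition. -/

lemma norm1_pos {d : ℕ} {x : Fin d → ℤ} (hx : x ≠ 0) : 0 < norm1 x := by
  obtain ⟨i, hi⟩ := Function.ne_iff.mp hx
  calc (0 : ℝ) < |(x i : ℝ)| := abs_pos.mpr (by exact_mod_cast hi)
    _ ≤ norm1 x := Finset.single_le_sum (f := fun j ↦ |(x j : ℝ)|)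
          (fun j _ ↦ abs_nonneg _) (Finset.mem_univ i)

lemma dotw_sub {d : ℕ} (x y : Fin d → ℤ) (ω : Fin d → ℝ) :
    dotw (x - y) ω = dotw x ω - dotw y ω := by
  simp [dotw, sub_mul]

lemma IsDiophantine.le_abs_fract_sub {d : ℕ} {ω : Fin d → ℝ} {τ γ : ℝ}
    (hω : IsDiophantine ω τ γ) {z : Fin d → ℤ} (hz : z ≠ 0) {a b : ℝ} (hab : a - b = dotw z ω) :
    γ * norm1 z ^ (-τ) ≤ |Int.fract a - Int.fract b| := by
  have key : ((⌊a⌋ - ⌊b⌋ : ℤ) : ℝ) - dotw z ω = -(Int.fract a - Int.fract b) := by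
    rw [← hab, Int.fract, Int.fract]; push_cast; ring
  simpa only [key, abs_neg] using hω.2 z hz (⌊a⌋ - ⌊b⌋)

lemma Function.Periodic.map_fract {α β : Type*} [Ring α] [LinearOrder α] [FloorRing α]
    {f : α → β} (hf : Function.Periodic f 1) (a : α) : f (Int.fract a) = f a := by
  simpa only [mul_one, Int.self_sub_floor] using hf.sub_int_mul_eq (x := a) ⌊a⌋

lemma mul_abs_fract_sub_le_abs_sub {F : ℝ → ℝ} {L : ℝ} (hper : Function.Periodic F 1)
    (hmono : ∀ θ₁ θ₂ : ℝ, 0 ≤ θ₁ → θ₁ ≤ θ₂ → θ₂ < 1 → L * (θ₂ - θ₁) ≤ F θ₂ - F θ₁) (a b : ℝ) :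
    L * |Int.fract a - Int.fract b| ≤ |F a - F b| := by
  rw [← hper.map_fract a, ← hper.map_fract b]
  rcases le_total (Int.fract a) (Int.fract b) with h | h
  · rw [abs_sub_comm, abs_of_nonneg (sub_nonneg.mpr h), abs_sub_comm]
    exact (hmono _ _ (Int.fract_nonneg a) h (Int.fract_lt_one b)).trans (le_abs_self _)
  · rw [abs_of_nonneg (sub_nonneg.mpr h)]
    exact (hmono _ _ (Int.fract_nonneg b) h (Int.fract_lt_one a)).trans (le_abs_self _)

lemma abs_sub_lt_of_norm_ofReal_sub_lt {u v δ : ℝ} {E : ℂ} (hu : ‖(u : ℂ) - E‖ < δ)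
    (hv : ‖(v : ℂ) - E‖ < δ) : |u - v| < 2 * δ := by
  have h : |u - v| = ‖((u : ℂ) - E) - ((v : ℂ) - E)‖ := by
    rw [sub_sub_sub_cancel_right, ← Complex.ofReal_sub, Complex.norm_real, Real.norm_eq_abs]
  rw [h, two_mul]
  exact (norm_sub_le _ _).trans_lt (add_lt_add hu hv)

theorem resonant_points_separation_general
    (d : ℕ) (τ γ : ℝ)
    (ω : Fin d → ℝ) (hω : IsDiophantine ω τ γ)
    (L : ℝ) (hL : 0 < L) (F : ℝ → ℝ)
    (hper : ∀ θ : ℝ, F (θ + 1) = F θ)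
    (hmono : ∀ θ₁ θ₂ : ℝ, 0 ≤ θ₁ → θ₁ ≤ θ₂ → θ₂ < 1 → L * (θ₂ - θ₁) ≤ F θ₂ - F θ₁)
    (θ : ℝ) (E : ℂ) (δ : ℝ) (x y : Fin d → ℤ) (hxy : x ≠ y)
    (hx : ‖(F (θ + dotw x ω) : ℂ) - E‖ < δ)
    (hy : ‖(F (θ + dotw y ω) : ℂ) - E‖ < δ) :
    L * γ / (2 * δ) ≤ norm1 (x - y) ^ τ := by
  have hz : x - y ≠ 0 := sub_ne_zero.mpr hxy
  have hN : 0 < norm1 (x - y) := norm1_pos hz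
  have hdio := hω.le_abs_fract_sub hz (a := θ + dotw x ω) (b := θ + dotw y ω)
    (by rw [dotw_sub]; ring)
  have hlip := mul_abs_fract_sub_le_abs_sub hper hmono (θ + dotw x ω) (θ + dotw y ω)
  have hres := abs_sub_lt_of_norm_ofReal_sub_lt hx hy
  have hsmall : L * γ * (norm1 (x - y) ^ τ)⁻¹ < 2 * δ := by
    rw [mul_assoc, ← Real.rpow_neg hN.le]
    exact ((mul_le_mul_of_nonneg_left hdio hL.le).trans hlip).trans_lt hres
  rw [div_le_iff₀ ((abs_nonneg _).trans_lt hres), mul_comm _ (2 * δ)]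
  exact ((mul_inv_lt_iff₀ (Real.rpow_pos_of_pos hN τ)).mp hsmall).le

/-- **Separation of resonant points** (Lemma 5.1): if `F` is 1-periodic and Lipschitz
monotone with constant `L` on `[0,1)`, and `ω` is Diophantine with parameters `τ, γ`, then any
two distinct `δ`-resonant points `x ≠ y` (i.e. `|F(θ + x·ω) − E| < δ` and
`|F(θ + y·ω) − E| < δ`) satisfy `‖x − y‖₁^τ ≥ Lγ/(2δ)`. -/
theorem resonant_points_separation
    (d : ℕ) (hd : 1 ≤ d) (τ γ : ℝ) (hτ : (d : ℝ) < τ) (hγ : 0 < γ)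
    (ω : Fin d → ℝ) (hω : IsDiophantine ω τ γ)
    (L : ℝ) (hL : 0 < L) (F : ℝ → ℝ)
    (hper : ∀ θ : ℝ, F (θ + 1) = F θ)
    (hmono : ∀ θ₁ θ₂ : ℝ, 0 ≤ θ₁ → θ₁ ≤ θ₂ → θ₂ < 1 → L * (θ₂ - θ₁) ≤ F θ₂ - F θ₁)
    (θ : ℝ) (E : ℂ) (δ : ℝ) (hδ : 0 < δ) (x y : Fin d → ℤ) (hxy : x ≠ y)
    (hx : ‖(F (θ + dotw x ω) : ℂ) - E‖ < δ)
    (hy : ‖(F (θ + dotw y ω) : ℂ) - E‖ < δ) :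
    L * γ / (2 * δ) ≤ norm1 (x - y) ^ τ :=
  resonant_points_separation_general d τ γ ω hω L hL F hper hmono θ E δ x y hxy hx hy
end

section
/- Let d ≥ 1 and n ≥ 1 be integers, let l₁ ≥ 30 be an integer, and set l_k := l₁^{2^{k−1}} for 1 ≤ k ≤ n. For each 0 ≤ k ≤ n−1 let S_k ⊆ ℤ^d be a set such that any two distinct points of S_k are at ℓ¹-distance at least 100 l_{k+1}. Then for every B ⊆ ℤ^d there exists B̃ ⊆ ℤ^d such that: (i) B ⊆ B̃ ⊆ {x ∈ ℤ^d : dist₁(x, B) ≤ 30 l_n}, and (ii) for every 0 ≤ k ≤ n−1 and every x ∈ B̃ ∩ S_k, one has Q_{10 l_{k+1}} + x ⊆ B̃, where Q_R := {y ∈ ℤ^d : ‖y‖₁ ≤ R}. -/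
open scoped BigOperators
open Matrix

lemma norm1_tri {d : ℕ} (x y z : Fin d → ℤ) :
    norm1 (x - z) ≤ norm1 (x - y) + norm1 (y - z) := by
  rw [norm1, norm1, norm1, ← Finset.sum_add_distrib]
  refine Finset.sum_le_sum fun i _ => ?_
  have h : (((x - z) i : ℤ) : ℝ) = (((x - y) i : ℤ) : ℝ) + (((y - z) i : ℤ) : ℝ) := by
    simp only [Pi.sub_apply]
    push_cast
    ring
  rw [h]
  exact abs_add_le _ _

lemma norm1_sub_self {d : ℕ} (x : Fin d → ℤ) : norm1 (x - x) = 0 := by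
  simp [norm1]

/-- `τ` trigger radius -/
def tauN (l₁ k : ℕ) : ℕ := 40 * ∑ i ∈ Finset.range k, l₁ ^ 2 ^ i

lemma geom_sum_le (l : ℕ) (hl : 30 ≤ l) (k : ℕ) :
    40 * ∑ i ∈ Finset.range (k + 1), l ^ 2 ^ i ≤ 42 * l ^ 2 ^ k := by
  induction k with
  | zero => simp; omega
  | succ k ih =>
    rw [Finset.sum_range_succ, Nat.mul_add]
    have hsq : l ^ 2 ^ (k + 1) = (l ^ 2 ^ k) * (l ^ 2 ^ k) := by
      rw [pow_succ, pow_mul, pow_two]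
    have h30 : 30 ≤ l ^ 2 ^ k := le_trans hl (Nat.le_self_pow (by positivity) l)
    nlinarith [ih]

lemma tauN_le (l : ℕ) (hl : 30 ≤ l) (k : ℕ) : tauN l k ≤ 2 * l ^ 2 ^ k := by
  cases k with
  | zero => simp [tauN]
  | succ k =>
    have h1 := geom_sum_le l hl k
    have hsq : l ^ 2 ^ (k + 1) = (l ^ 2 ^ k) * (l ^ 2 ^ k) := by
      rw [pow_succ, pow_mul, pow_two]
    have h30 : 30 ≤ l ^ 2 ^ k := le_trans hl (Nat.le_self_pow (by positivity) l)
    rw [tauN, hsq]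
    nlinarith

lemma rho_le (l n : ℕ) (hl : 30 ≤ l) (hn : 1 ≤ n) :
    ∑ k ∈ Finset.range n, (tauN l k + 10 * l ^ 2 ^ k) ≤ 30 * l ^ 2 ^ (n - 1) := by
  obtain ⟨m, rfl⟩ : ∃ m, n = m + 1 := ⟨n - 1, by omega⟩
  have h1 : ∀ k ∈ Finset.range (m + 1), tauN l k + 10 * l ^ 2 ^ k ≤ 12 * l ^ 2 ^ k := by
    intro k _
    have := tauN_le l hl k
    omega
  have h2 : ∑ k ∈ Finset.range (m + 1), (tauN l k + 10 * l ^ 2 ^ k)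
      ≤ ∑ k ∈ Finset.range (m + 1), 12 * l ^ 2 ^ k := Finset.sum_le_sum h1
  have h3 := geom_sum_le l hl m
  rw [← Finset.mul_sum] at h2
  simp only [Nat.add_sub_cancel]
  have h4 : 40 * (12 * ∑ k ∈ Finset.range (m + 1), l ^ 2 ^ k)
      ≤ 40 * (30 * l ^ 2 ^ m) := by
    calc 40 * (12 * ∑ k ∈ Finset.range (m + 1), l ^ 2 ^ k)
        = 12 * (40 * ∑ k ∈ Finset.range (m + 1), l ^ 2 ^ k) := by ring
      _ ≤ 12 * (42 * l ^ 2 ^ m) := Nat.mul_le_mul_left 12 h3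
      _ ≤ 40 * (30 * l ^ 2 ^ m) := by ring_nf; omega
  exact le_trans h2 (Nat.le_of_mul_le_mul_left h4 (by norm_num))

/-- The regularization process: at stage `j+1`, add blocks of scale `k = n-1-j`
around every point of `S k` within `ℓ¹`-distance `tauN l₁ k` of the current set. -/
noncomputable def reg (d n l₁ : ℕ) (S : ℕ → Set (Fin d → ℤ)) (B : Set (Fin d → ℤ)) :
    ℕ → Set (Fin d → ℤ)
  | 0 => B
  | j + 1 => reg d n l₁ S B j ∪
      {z | ∃ x, x ∈ S (n - 1 - j) ∧
        (∃ w ∈ reg d n l₁ S B j, norm1 (x - w) ≤ ((tauN l₁ (n - 1 - j) : ℕ) : ℝ)) ∧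
        norm1 (z - x) ≤ ((10 * l₁ ^ 2 ^ (n - 1 - j) : ℕ) : ℝ)}

lemma reg_succ (d n l₁ : ℕ) (S : ℕ → Set (Fin d → ℤ)) (B : Set (Fin d → ℤ)) (j : ℕ) :
    reg d n l₁ S B (j + 1) = reg d n l₁ S B j ∪
      {z | ∃ x, x ∈ S (n - 1 - j) ∧
        (∃ w ∈ reg d n l₁ S B j, norm1 (x - w) ≤ ((tauN l₁ (n - 1 - j) : ℕ) : ℝ)) ∧
        norm1 (z - x) ≤ ((10 * l₁ ^ 2 ^ (n - 1 - j) : ℕ) : ℝ)} := rfl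

/-- **n-regularization lemma** (Lemma 5.2): with scales `l_k = l₁^{2^{k−1}}`, if each `S_k`
(`0 ≤ k ≤ n−1`) has pairwise ℓ¹-separation at least `100 l_{k+1}`, then every `B ⊆ ℤ^d` can be
enlarged to `B̃` with `B ⊆ B̃ ⊆ {x : dist₁(x,B) ≤ 30 l_n}` such that for every `k ≤ n−1` and
every `x ∈ B̃ ∩ S_k` the block `Q_{10 l_{k+1}} + x` is contained in `B̃`. -/
theorem n_regularization (d n l₁ : ℕ) (hd : 1 ≤ d) (hn : 1 ≤ n) (hl : 30 ≤ l₁)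
    (S : ℕ → Set (Fin d → ℤ))
    (hS : ∀ k, k < n → ∀ x ∈ S k, ∀ y ∈ S k, x ≠ y →
      ((100 * l₁ ^ 2 ^ k : ℕ) : ℝ) ≤ norm1 (x - y))
    (B : Set (Fin d → ℤ)) :
    ∃ Bt : Set (Fin d → ℤ),
      B ⊆ Bt ∧
      Bt ⊆ {x : Fin d → ℤ | ∃ b ∈ B, norm1 (x - b) ≤ ((30 * l₁ ^ 2 ^ (n - 1) : ℕ) : ℝ)} ∧
      ∀ k, k < n → ∀ x ∈ Bt ∩ S k,
        ((fun y => y + x) ''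
            {y : Fin d → ℤ | norm1 y ≤ ((10 * l₁ ^ 2 ^ k : ℕ) : ℝ)}) ⊆ Bt := by
  classical
  have hmono : ∀ j, reg d n l₁ S B j ⊆ reg d n l₁ S B (j + 1) := by
    intro j
    rw [reg_succ]
    exact Set.subset_union_left
  have hBsub : ∀ j, B ⊆ reg d n l₁ S B j := by
    intro j
    induction j with
    | zero => exact subset_rfl
    | succ j ih => exact ih.trans (hmono j)
  have hLpos : ∀ k : ℕ, 1 ≤ l₁ ^ 2 ^ k := fun k => Nat.one_le_pow _ _ (by omega)
  have htau2 : ∀ k, tauN l₁ k ≤ 2 * l₁ ^ 2 ^ k := tauN_le l₁ hl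
  have htaumono : ∀ a b : ℕ, a ≤ b → tauN l₁ a ≤ tauN l₁ b := by
    intro a b hab
    exact Nat.mul_le_mul_left _ (Finset.sum_le_sum_of_subset
      (Finset.range_subset_range.mpr hab))
  have key : ∀ j, j ≤ n →
      (∀ z ∈ reg d n l₁ S B j, ∃ b ∈ B,
        norm1 (z - b) ≤
          ((∑ i ∈ Finset.range j,
            (tauN l₁ (n - 1 - i) + 10 * l₁ ^ 2 ^ (n - 1 - i)) : ℕ) : ℝ)) ∧
      (∀ m, m < n → n - j ≤ m → ∀ x ∈ S m,
        (∃ w ∈ reg d n l₁ S B j, norm1 (x - w) ≤ ((tauN l₁ (n - j) : ℕ) : ℝ)) →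
        ∀ z, norm1 (z - x) ≤ ((10 * l₁ ^ 2 ^ m : ℕ) : ℝ) → z ∈ reg d n l₁ S B j) := by
    intro j
    induction j with
    | zero =>
      intro _
      constructor
      · intro z hz
        exact ⟨z, hz, by simp [norm1]⟩
      · intro m hm hm2
        exact absurd hm (by omega)
    | succ j ih =>
      intro hj1
      have hjn : j < n := hj1
      obtain ⟨ih1, ih2⟩ := ih (le_of_lt hjn)
      have hk1 : n - j = (n - 1 - j) + 1 := by omega
      have hk2 : n - (j + 1) = n - 1 - j := by omega
      constructor
      · intro z hz
        rw [reg_succ] at hz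
        rcases hz with hz | hz
        · obtain ⟨b, hb, hlb⟩ := ih1 z hz
          refine ⟨b, hb, hlb.trans (Nat.cast_le.mpr ?_)⟩
          rw [Finset.sum_range_succ]
          omega
        · obtain ⟨x, hxS, ⟨w, hw, hxw⟩, hzx⟩ := hz
          obtain ⟨b, hb, hwb⟩ := ih1 w hw
          refine ⟨b, hb, ?_⟩
          have t1 := norm1_tri z x b
          have t2 := norm1_tri x w b
          have hsum : ((∑ i ∈ Finset.range (j + 1),
              (tauN l₁ (n - 1 - i) + 10 * l₁ ^ 2 ^ (n - 1 - i)) : ℕ) : ℝ)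
              = ((∑ i ∈ Finset.range j,
                  (tauN l₁ (n - 1 - i) + 10 * l₁ ^ 2 ^ (n - 1 - i)) : ℕ) : ℝ)
                + ((tauN l₁ (n - 1 - j) : ℕ) : ℝ)
                + ((10 * l₁ ^ 2 ^ (n - 1 - j) : ℕ) : ℝ) := by
            rw [Finset.sum_range_succ]
            push_cast
            ring
          rw [hsum]
          linarith
      · rintro m hm hmk x hxS ⟨w, hw, hxw⟩ z hzx
        rw [hk2] at hxw hmk
        rw [reg_succ] at hw ⊢
        rcases hw with hw | hw
        · by_cases hmk' : m = n - 1 - j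
          · subst hmk'
            exact Or.inr ⟨x, hxS, ⟨w, hw, hxw⟩, hzx⟩
          · have hmk2 : n - j ≤ m := by omega
            refine Or.inl (ih2 m hm hmk2 x hxS ⟨w, hw, hxw.trans (Nat.cast_le.mpr ?_)⟩ z hzx)
            exact htaumono _ _ (by omega)
        · obtain ⟨x', hx'S, ⟨w', hw', hx'w'⟩, hwx'⟩ := hw
          by_cases hmk' : m = n - 1 - j
          · subst hmk'
            have hxx' : x = x' := by
              by_contra hne
              have hsep := hS (n - 1 - j) hm x hxS x' hx'S hne
              have t1 := norm1_tri x w x'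
              have hcast : ((tauN l₁ (n - 1 - j) : ℕ) : ℝ)
                  + ((10 * l₁ ^ 2 ^ (n - 1 - j) : ℕ) : ℝ)
                  < ((100 * l₁ ^ 2 ^ (n - 1 - j) : ℕ) : ℝ) := by
                rw [← Nat.cast_add]
                refine Nat.cast_lt.mpr ?_
                have := htau2 (n - 1 - j)
                have := hLpos (n - 1 - j)
                omega
              linarith
            subst hxx'
            exact Or.inr ⟨x, hxS, ⟨w', hw', hx'w'⟩, hzx⟩
          · have hmk2 : n - j ≤ m := by omega
            have hxw'' : norm1 (x - w') ≤ ((tauN l₁ (n - j) : ℕ) : ℝ) := by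
              have t1 := norm1_tri x w w'
              have t2 := norm1_tri w x' w'
              have hnum : tauN l₁ (n - 1 - j) + (10 * l₁ ^ 2 ^ (n - 1 - j)
                  + tauN l₁ (n - 1 - j)) ≤ tauN l₁ (n - j) := by
                have h2 := htau2 (n - 1 - j)
                rw [hk1]
                simp only [tauN] at h2 ⊢
                rw [Finset.sum_range_succ, Nat.mul_add]
                omega
              have hcast : ((tauN l₁ (n - 1 - j) : ℕ) : ℝ)
                  + (((10 * l₁ ^ 2 ^ (n - 1 - j) : ℕ) : ℝ)
                  + ((tauN l₁ (n - 1 - j) : ℕ) : ℝ)) ≤ ((tauN l₁ (n - j) : ℕ) : ℝ) := by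
                rw [← Nat.cast_add, ← Nat.cast_add]
                exact Nat.cast_le.mpr hnum
              linarith
            exact Or.inl (ih2 m hm hmk2 x hxS ⟨w', hw', hxw''⟩ z hzx)
  obtain ⟨key1, key2⟩ := key n le_rfl
  refine ⟨reg d n l₁ S B n, hBsub n, ?_, ?_⟩
  · intro z hz
    obtain ⟨b, hb, hlb⟩ := key1 z hz
    refine ⟨b, hb, hlb.trans (Nat.cast_le.mpr ?_)⟩
    calc ∑ i ∈ Finset.range n, (tauN l₁ (n - 1 - i) + 10 * l₁ ^ 2 ^ (n - 1 - i))
        = ∑ i ∈ Finset.range n, (tauN l₁ i + 10 * l₁ ^ 2 ^ i) :=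
          Finset.sum_range_reflect (fun i => tauN l₁ i + 10 * l₁ ^ 2 ^ i) n
      _ ≤ 30 * l₁ ^ 2 ^ (n - 1) := rho_le l₁ n hl hn
  · rintro k hk x ⟨hxB, hxS⟩ z ⟨y, hy, rfl⟩
    refine key2 k hk (by omega) x hxS ⟨x, hxB, ?_⟩ (y + x) ?_
    · simp [norm1, tauN]
    · simpa using hy
end

section
/- Let n ∈ ℕ, let A be an n×n real symmetric matrix, let k be an index, and let B := A − e_k e_kᵀ, i.e. B equals A except that its (k,k) entry is decreased by 1. Assume both A and B are invertible. Then for every vector c ∈ ℝⁿ, cᵀ(B⁻¹ − A⁻¹)c = (cᵀ · adjugate(A) · e_k)² / (det A · det B), where e_k is the k-th standard basis vector. -/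
open Matrix

/-!
Since `A - B = e_k e_kᵀ`, the resolvent identity gives `B⁻¹ - A⁻¹ = B⁻¹ e_k e_kᵀ A⁻¹`, so
`cᵀ(B⁻¹ - A⁻¹)c = (cᵀ B⁻¹ e_k)(e_kᵀ A⁻¹ c)`, and by symmetry of `A` the second factor is
`cᵀ A⁻¹ e_k`. By Cramer's rule both factors are `cᵀ adj(·) e_k` over the determinant, and the
`k`-th column of the adjugate only depends on the rows other than `k`, where `A` and `B` agree.
-/

namespace Matrix

variable {n α : Type*} [Fintype n] [DecidableEq n]

theorem adjugate_apply_eq_of_forall_row_ne_eq [CommRing α] {M N : Matrix n n α} {j : n}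
    (h : ∀ i ≠ j, M i = N i) (i : n) : M.adjugate i j = N.adjugate i j := by
  rw [adjugate_apply, adjugate_apply]
  congr 1
  ext a b
  rcases eq_or_ne a j with rfl | ha
  · rw [updateRow_self, updateRow_self]
  · rw [updateRow_ne ha, updateRow_ne ha, h a ha]

theorem vecMul_adjugate_apply_eq_of_forall_row_ne_eq [CommRing α] {M N : Matrix n n α} {j : n}
    (h : ∀ i ≠ j, M i = N i) (u : n → α) : (u ᵥ* M.adjugate) j = (u ᵥ* N.adjugate) j := by
  simp only [vecMul, dotProduct, adjugate_apply_eq_of_forall_row_ne_eq h]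

theorem dotProduct_mul_single_one_mul_mulVec [CommSemiring α] {m : Type*} [Fintype m]
    (M : Matrix m n α) (N : Matrix n m α) (i j : n) (u v : m → α) :
    u ⬝ᵥ ((M * single i j (1 : α) * N) *ᵥ v) = (u ᵥ* M) i * (N *ᵥ v) j := by
  rw [← mulVec_mulVec, ← mulVec_mulVec, dotProduct_mulVec, single_mulVec_eq, dotProduct_smul,
    dotProduct_single_one, smul_eq_mul, one_mul, mul_comm]

theorem vecMul_inv_apply [Field α] (M : Matrix n n α) (u : n → α) (j : n) :
    (u ᵥ* M⁻¹) j = (u ᵥ* M.adjugate) j / M.det := by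
  rw [inv_def, Ring.inverse_eq_inv', vecMul_smul, Pi.smul_apply, smul_eq_mul, div_eq_inv_mul]

end Matrix

/-- **Rank-one resolvent difference as a square over determinants** (equation (1528)):
for a real symmetric invertible `A` and `B = A − e_k e_kᵀ` invertible,
`cᵀ(B⁻¹ − A⁻¹)c = (cᵀ · adj(A) · e_k)² / (det A · det B)`. -/
theorem rank_one_resolvent_difference_sq {n : ℕ}
    (A : Matrix (Fin n) (Fin n) ℝ) (hA : A.IsSymm) (k : Fin n)
    (B : Matrix (Fin n) (Fin n) ℝ) (hB : B = A - Matrix.single k k 1)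
    (hAu : IsUnit A.det) (hBu : IsUnit B.det) (c : Fin n → ℝ) :
    c ⬝ᵥ ((B⁻¹ - A⁻¹) *ᵥ c)
      = (c ⬝ᵥ (A.adjugate *ᵥ Pi.single k 1)) ^ 2 / (A.det * B.det) := by
  have hAB : A - B = single k k 1 := by rw [hB, sub_sub_cancel]
  have hrows : ∀ i ≠ k, B i = A i := fun i hi ↦ by
    ext j
    rw [hB, Matrix.sub_apply, single_apply_of_row_ne hi.symm, sub_zero]
  have hsymm : A⁻¹ *ᵥ c = c ᵥ* A⁻¹ := by rw [← vecMul_transpose, hA.inv.eq]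
  rw [inv_sub_inv (iff_of_true ((isUnit_iff_isUnit_det B).2 hBu)
      ((isUnit_iff_isUnit_det A).2 hAu)), hAB, dotProduct_mul_single_one_mul_mulVec, hsymm,
    vecMul_inv_apply, vecMul_inv_apply, vecMul_adjugate_apply_eq_of_forall_row_ne_eq hrows,
    dotProduct_mulVec, dotProduct_single_one]
  ring
end

section
/- Let d ≥ 1 and let H be a bounded self-adjoint operator on ℓ²(ℤ^d; ℂ). Let (ψ_s)_{s∈S} be an orthonormal (Hilbert) basis of ℓ²(ℤ^d;ℂ) indexed by a countable set S such that each ψ_s is an eigenfunction of H: Hψ_s = μ_s ψ_s with μ_s ∈ ℝ. Let p : S → ℤ^d be an arbitrary function. Then for every t ∈ ℝ and all x, y ∈ ℤ^d, |⟨e^{itH} δ_x, δ_y⟩| ≤ Σ_{q ∈ ℤ^d} ( Σ_{s ∈ S, p(s) = q} |ψ_s(x)|² · Σ_{s ∈ S, p(s) = q} |ψ_s(y)|² )^{1/2}, where the sums are taken in [0, ∞], δ_x denotes the standard basis vector of ℓ²(ℤ^d;ℂ) at site x, and e^{itH} is the exponential of the bounded operator itH. -/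
open scoped BigOperators ENNReal

/-- The Hilbert space `ℓ²(ℤ^d; ℂ)`. -/
noncomputable abbrev L2Z (d : ℕ) := lp (fun _ : Fin d → ℤ => ℂ) 2

/-!
Expanding `δ_x` in the eigenbasis, `e^{itH}` acts diagonally with unimodular factors
`e^{itμ_s}`, so `|⟨e^{itH} δ_x, δ_y⟩| ≤ ∑_s |ψ_s(x)| |ψ_s(y)|`. Grouping the terms of this
series according to `p(s)` and applying Cauchy–Schwarz on each fibre gives the bound.
-/

open scoped InnerProductSpace

theorem NormedSpace.exp_apply_of_apply_eq_smul {𝕜 E : Type*} [RCLike 𝕜] [NormedAddCommGroup E]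
    [NormedSpace 𝕜 E] [CompleteSpace E] {A : E →L[𝕜] E} {c : 𝕜} {v : E} (h : A v = c • v) :
    exp A v = exp c • v := by
  have hpow : ∀ n : ℕ, (A ^ n) v = c ^ n • v := by
    intro n
    induction n with
    | zero => simp
    | succ n ih =>
      rw [pow_succ, pow_succ, mul_apply_eq_comp, h, map_smul, ih, smul_smul, mul_comm]
  have hA := (exp_series_hasSum_exp' (𝕂 := 𝕜) A).mapL (ContinuousLinearMap.apply 𝕜 E v)
  have hc := (exp_series_hasSum_exp' (𝕂 := 𝕜) c).smul_const v
  refine hA.unique (hc.congr_fun fun n => ?_)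
  simp [hpow, smul_smul]

section DiagonalOperator

variable {ι 𝕜 E : Type*} [RCLike 𝕜] [NormedAddCommGroup E] [InnerProductSpace 𝕜 E]
  (b : HilbertBasis ι 𝕜 E) {U : E →L[𝕜] E} {c : ι → 𝕜}

theorem HilbertBasis.hasSum_inner_apply_of_apply_eq_smul (hU : ∀ i, U (b i) = c i • b i)
    (v w : E) : HasSum (fun i => c i * ⟪b i, v⟫_𝕜 * ⟪w, b i⟫_𝕜) ⟪w, U v⟫_𝕜 := by
  refine ((b.hasSum_repr v).mapL ((innerSL 𝕜 w).comp U)).congr_fun fun i => ?_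
  simp only [ContinuousLinearMap.comp_apply, map_smul, hU, innerSL_apply_apply, smul_eq_mul,
    b.repr_apply_apply]
  ring

theorem HilbertBasis.enorm_inner_apply_le_tsum_of_apply_eq_smul (hU : ∀ i, U (b i) = c i • b i)
    (hc : ∀ i, ‖c i‖ ≤ 1) (v w : E) :
    ‖⟪U v, w⟫_𝕜‖ₑ ≤ ∑' i, ‖⟪b i, v⟫_𝕜‖ₑ * ‖⟪b i, w⟫_𝕜‖ₑ := by
  have hc' : ∀ i, ‖c i‖ₑ ≤ 1 := fun i => by simpa [← ofReal_norm] using hc i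
  calc ‖⟪U v, w⟫_𝕜‖ₑ = ‖∑' i, c i * ⟪b i, v⟫_𝕜 * ⟪w, b i⟫_𝕜‖ₑ := by
        rw [(b.hasSum_inner_apply_of_apply_eq_smul hU v w).tsum_eq, ← inner_conj_symm,
          RCLike.enorm_conj]
    _ ≤ ∑' i, ‖c i * ⟪b i, v⟫_𝕜 * ⟪w, b i⟫_𝕜‖ₑ := enorm_tsum_le_tsum_enorm
    _ ≤ ∑' i, ‖⟪b i, v⟫_𝕜‖ₑ * ‖⟪b i, w⟫_𝕜‖ₑ := by
        gcongr with i
        rw [enorm_mul, enorm_mul, ← inner_conj_symm w, RCLike.enorm_conj, mul_assoc]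
        exact mul_le_of_le_one_left' (hc' i)

end DiagonalOperator

theorem lp.enorm_inner_single_one {ι 𝕜 : Type*} [RCLike 𝕜] [DecidableEq ι]
    (f : lp (fun _ : ι => 𝕜) 2) (i : ι) : ‖⟪f, lp.single 2 i (1 : 𝕜)⟫_𝕜‖ₑ = ‖f i‖ₑ := by
  simp [lp.inner_single_right]

theorem ENNReal.tsum_mul_le_rpow_tsum_sq_mul_tsum_sq {ι : Type*} (f g : ι → ℝ≥0∞) :
    ∑' i, f i * g i ≤ ((∑' i, f i ^ 2) * (∑' i, g i ^ 2)) ^ ((1 : ℝ) / 2) := by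
  let _ : MeasurableSpace ι := ⊤
  have h := ENNReal.lintegral_mul_le_Lp_mul_Lq MeasureTheory.Measure.count
    Real.HolderConjugate.two_two (measurable_from_top (f := f)).aemeasurable
    (measurable_from_top (f := g)).aemeasurable
  simp only [MeasureTheory.lintegral_count' measurable_from_top, ENNReal.rpow_two] at h
  rwa [ENNReal.mul_rpow_of_nonneg _ _ (by norm_num)]

theorem ENNReal.tsum_mul_le_tsum_fiberwise_rpow {ι κ : Type*} (f g : ι → ℝ≥0∞) (p : ι → κ) :
    ∑' i, f i * g i ≤ ∑' k, ((∑' i : {i // p i = k}, f i ^ 2) *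
      (∑' i : {i // p i = k}, g i ^ 2)) ^ ((1 : ℝ) / 2) := by
  rw [← ENNReal.tsum_fiberwise _ p]
  gcongr with k
  exact ENNReal.tsum_mul_le_rpow_tsum_sq_mul_tsum_sq (fun i : p ⁻¹' {k} => f i) (fun i => g i)

theorem unitary_kernel_bound_via_eigenbasis_general
    (d : ℕ)
    (H : L2Z d →L[ℂ] L2Z d)
    (S : Type) (b : HilbertBasis S ℂ (L2Z d)) (μ : S → ℝ)
    (heig : ∀ s : S, H (b s) = (μ s : ℂ) • b s)
    (p : S → Fin d → ℤ) (t : ℝ) (x y : Fin d → ℤ) :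
    (‖(inner ℂ (NormedSpace.exp (((t : ℂ) * Complex.I) • H) (lp.single 2 x (1 : ℂ)))
        (lp.single 2 y (1 : ℂ)) : ℂ)‖₊ : ℝ≥0∞)
      ≤ ∑' q : Fin d → ℤ,
          ((∑' s : {s : S // p s = q}, (‖(b s.1 : ∀ _ : Fin d → ℤ, ℂ) x‖₊ : ℝ≥0∞) ^ 2) *
            (∑' s : {s : S // p s = q}, (‖(b s.1 : ∀ _ : Fin d → ℤ, ℂ) y‖₊ : ℝ≥0∞) ^ 2))
            ^ ((1 : ℝ) / 2) := by
  have hU : ∀ s, NormedSpace.exp (((t : ℂ) * Complex.I) • H) (b s) =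
      NormedSpace.exp ((t : ℂ) * Complex.I * μ s) • b s := fun s =>
    NormedSpace.exp_apply_of_apply_eq_smul (by rw [smul_apply, heig, smul_smul])
  have hunit : ∀ s, ‖NormedSpace.exp ((t : ℂ) * Complex.I * μ s)‖ ≤ 1 := fun s => by
    rw [← Complex.exp_eq_exp_ℂ, mul_right_comm, ← Complex.ofReal_mul,
      Complex.norm_exp_ofReal_mul_I]
  calc _ ≤ ∑' s, ‖⟪b s, lp.single 2 x (1 : ℂ)⟫_ℂ‖ₑ * ‖⟪b s, lp.single 2 y (1 : ℂ)⟫_ℂ‖ₑ :=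
        b.enorm_inner_apply_le_tsum_of_apply_eq_smul hU hunit _ _
    _ = ∑' s, ‖(b s : ∀ _ : Fin d → ℤ, ℂ) x‖ₑ * ‖(b s : ∀ _ : Fin d → ℤ, ℂ) y‖ₑ := by
        simp only [lp.enorm_inner_single_one]
    _ ≤ _ := ENNReal.tsum_mul_le_tsum_fiberwise_rpow _ _ p

/-- **Cauchy–Schwarz bound for the unitary group kernel** (Lemma 5.6 / [JK13, Thm 2.1]):
for a bounded self-adjoint `H` with an orthonormal eigenbasis `(ψ_s)` and any assignment
`p : S → ℤ^d`,
`|⟨e^{itH} δ_x, δ_y⟩| ≤ ∑_q (∑_{p(s)=q} |ψ_s(x)|² ⋅ ∑_{p(s)=q} |ψ_s(y)|²)^{1/2}`. -/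
theorem unitary_kernel_bound_via_eigenbasis
    (d : ℕ) (hd : 1 ≤ d)
    (H : L2Z d →L[ℂ] L2Z d) (hH : IsSelfAdjoint H)
    (S : Type) [Countable S] (b : HilbertBasis S ℂ (L2Z d)) (μ : S → ℝ)
    (heig : ∀ s : S, H (b s) = (μ s : ℂ) • b s)
    (p : S → Fin d → ℤ) (t : ℝ) (x y : Fin d → ℤ) :
    (‖(inner ℂ (NormedSpace.exp (((t : ℂ) * Complex.I) • H) (lp.single 2 x (1 : ℂ)))
        (lp.single 2 y (1 : ℂ)) : ℂ)‖₊ : ℝ≥0∞)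
      ≤ ∑' q : Fin d → ℤ,
          ((∑' s : {s : S // p s = q}, (‖(b s.1 : ∀ _ : Fin d → ℤ, ℂ) x‖₊ : ℝ≥0∞) ^ 2) *
            (∑' s : {s : S // p s = q}, (‖(b s.1 : ∀ _ : Fin d → ℤ, ℂ) y‖₊ : ℝ≥0∞) ^ 2))
            ^ ((1 : ℝ) / 2) :=
  unitary_kernel_bound_via_eigenbasis_general d H S b μ heig p t x y
end
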